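/- arXiv:2403.09009 — 3 statements merged into one kernel-verified Lean document; each statement's English description precedes it below -/
import Mathlib

section
/- Let Q = {B₁, ..., B_{d+1}} be a family of d+1 nonempty compact convex sets in ℝ^d. A point p lies in the intersection of the convex hulls of all transversals of Q (i.e., all sets {p₁,...,p_{d+1}} with pᵢ ∈ Bᵢ) if and only if for every closed halfspace H whose boundary hyperplane passes through p, at least one Bᵢ is contained in H. -/
/-!
A point lies in the convex hull of finitely many points iff every closed halfspace bounded by
a hyperplane through it contains one of them: one direction is the minimum principle for linear
functionals, the other is Hahn–Banach separation from the (closed) hull. Quantifying over all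
transversals, "every transversal meets the halfspace" means "some set lies inside it".
-/

open Set

/-- The invariant hull of a family of sets: the intersection of the convex hulls of
all transversals (choices of one point from each set). -/
def IHull {ι E : Type*} [AddCommGroup E] [Module ℝ E] (B : ι → Set E) : Set E :=
  ⋂ f ∈ {f : ι → E | ∀ i, f i ∈ B i}, convexHull ℝ (Set.range f)

theorem forall_mem_pi_exists_iff {ι α : Type*} (B : ι → Set α) (P : ι → α → Prop) :
    (∀ f : ι → α, (∀ i, f i ∈ B i) → ∃ i, P i (f i)) ↔ ∃ i, ∀ x ∈ B i, P i x := by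
  refine ⟨fun h ↦ ?_, fun ⟨i, hi⟩ f hf ↦ ⟨i, hi _ (hf i)⟩⟩
  by_contra! hB
  choose f hfB hfP using hB
  obtain ⟨i, hi⟩ := h f hfB
  exact hfP i hi

theorem exists_apply_le_of_mem_convexHull_range {ι E : Type*} [AddCommGroup E] [Module ℝ E]
    {f : ι → E} {p : E} (hp : p ∈ convexHull ℝ (range f)) (l : E →ₗ[ℝ] ℝ) :
    ∃ i, l (f i) ≤ l p := by
  obtain ⟨_, ⟨i, rfl⟩, hi⟩ :=
    (l.concaveOn convex_univ).exists_le_of_mem_convexHull (subset_univ _) hp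
  exact ⟨i, hi⟩

section ConvexHull

variable {ι E : Type*} [TopologicalSpace E] [AddCommGroup E] [IsTopologicalAddGroup E]
  [Module ℝ E] [ContinuousSMul ℝ E] [LocallyConvexSpace ℝ E] [T2Space E]

theorem mem_convexHull_range_of_forall_exists_apply_le [Finite ι] [Nonempty ι] {f : ι → E}
    {p : E} (h : ∀ l : E →L[ℝ] ℝ, l ≠ 0 → ∃ i, l (f i) ≤ l p) :
    p ∈ convexHull ℝ (range f) := by
  by_contra hp
  obtain ⟨l, u, hlp, hlf⟩ := geometric_hahn_banach_point_closed (convex_convexHull ℝ _)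
    ((finite_range f).isClosed_convexHull ℝ) hp
  have hf : ∀ i, u < l (f i) := fun i ↦ hlf _ (subset_convexHull ℝ _ ⟨i, rfl⟩)
  have hl : l ≠ 0 := by
    rintro rfl
    exact (hlp.trans (hf (Classical.arbitrary ι))).false
  obtain ⟨i, hi⟩ := h l hl
  linarith [hf i]

theorem mem_convexHull_range_iff_forall_exists_apply_le [Finite ι] [Nonempty ι] {f : ι → E}
    {p : E} : p ∈ convexHull ℝ (range f) ↔ ∀ l : E →L[ℝ] ℝ, l ≠ 0 → ∃ i, l (f i) ≤ l p :=
  ⟨fun hp l _ ↦ exists_apply_le_of_mem_convexHull_range hp l,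
    mem_convexHull_range_of_forall_exists_apply_le⟩

theorem mem_IHull_iff_forall_exists_subset_halfSpace [Finite ι] [Nonempty ι] {B : ι → Set E}
    {p : E} : p ∈ IHull B ↔ ∀ l : E →L[ℝ] ℝ, l ≠ 0 → ∃ i, B i ⊆ {x | l x ≤ l p} := by
  simp only [IHull, mem_iInter, mem_ofPred_eq, mem_convexHull_range_iff_forall_exists_apply_le]
  constructor
  · intro h l hl
    exact (forall_mem_pi_exists_iff B fun _ x ↦ l x ≤ l p).mp fun f hf ↦ h f hf l hl
  · intro h f hf l hl
    exact (forall_mem_pi_exists_iff B fun _ x ↦ l x ≤ l p).mpr (h l hl) f hf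

end ConvexHull

theorem stmt_0_general {d : ℕ} (Q : Fin (d + 1) → Set (EuclideanSpace ℝ (Fin d)))
    (p : EuclideanSpace ℝ (Fin d)) :
    p ∈ IHull Q ↔
      ∀ l : EuclideanSpace ℝ (Fin d) →L[ℝ] ℝ, l ≠ 0 → ∃ i, Q i ⊆ {x | l x ≤ l p} :=
  mem_IHull_iff_forall_exists_subset_halfSpace

theorem stmt_0 {d : ℕ} (Q : Fin (d + 1) → Set (EuclideanSpace ℝ (Fin d)))
    (hne : ∀ i, (Q i).Nonempty) (hcpt : ∀ i, IsCompact (Q i))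
    (hconv : ∀ i, Convex ℝ (Q i)) (p : EuclideanSpace ℝ (Fin d)) :
    p ∈ IHull Q ↔
      ∀ l : EuclideanSpace ℝ (Fin d) →L[ℝ] ℝ, l ≠ 0 → ∃ i, Q i ⊆ {x | l x ≤ l p} :=
  stmt_0_general Q p
end

section
/- Let K = {K₁, ..., Kₙ} be a family of n ≥ d+1 nonempty sets in ℝ^d. Then the union, over all (d+1)-member subfamilies S of K, of the convex hull of the union of the sets in S, equals the convex hull of the union of all sets in K. -/
/-! Carathéodory's theorem writes a point of `convexHull (⋃ i, K i)` as a convex combination of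
at most `d + 1` points of `⋃ i, K i`; each of them lies in some `K i`, so at most `d + 1` of the
sets are involved, and the subfamily can then be enlarged to exactly `d + 1` members. -/

open Set Finset Module

theorem AffineIndependent.card_finset_le_finrank_succ {𝕜 E : Type*} [DivisionRing 𝕜]
    [AddCommGroup E] [Module 𝕜 E] [FiniteDimensional 𝕜 E] {t : Finset E}
    (ht : AffineIndependent 𝕜 ((↑) : t → E)) : #t ≤ finrank 𝕜 E + 1 := by
  simpa using ht.card_le_finrank_succ.trans (Nat.succ_le_succ (Submodule.finrank_le _))

section

variable {𝕜 E ι : Type*} [Field 𝕜] [LinearOrder 𝕜] [IsStrictOrderedRing 𝕜]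
  [AddCommGroup E] [Module 𝕜 E] [FiniteDimensional 𝕜 E]

theorem exists_finset_card_le_finrank_succ_mem_convexHull {s : Set E} {x : E}
    (hx : x ∈ convexHull 𝕜 s) :
    ∃ t : Finset E, ↑t ⊆ s ∧ #t ≤ finrank 𝕜 E + 1 ∧ x ∈ convexHull 𝕜 ↑t := by
  rw [convexHull_eq_union] at hx
  simp only [mem_iUnion] at hx
  obtain ⟨t, hts, hindep, hxt⟩ := hx
  exact ⟨t, hts, hindep.card_finset_le_finrank_succ, hxt⟩

theorem Finset.exists_card_le_subset_biUnion {α : Type*} {K : ι → Set α} (t : Finset α)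
    (ht : ↑t ⊆ ⋃ i, K i) : ∃ T : Finset ι, #T ≤ #t ∧ ↑t ⊆ ⋃ i ∈ T, K i := by
  classical
  choose f hf using fun p : t => mem_iUnion.1 (ht p.2)
  refine ⟨univ.image f, card_image_le.trans (by simp), fun p hp => ?_⟩
  exact mem_iUnion₂.2 ⟨f ⟨p, hp⟩, mem_image_of_mem f (mem_univ _), hf _⟩

theorem exists_finset_card_le_finrank_succ_mem_convexHull_iUnion {K : ι → Set E} {x : E}
    (hx : x ∈ convexHull 𝕜 (⋃ i, K i)) :
    ∃ T : Finset ι, #T ≤ finrank 𝕜 E + 1 ∧ x ∈ convexHull 𝕜 (⋃ i ∈ T, K i) := by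
  obtain ⟨t, htK, ht_card, hxt⟩ := exists_finset_card_le_finrank_succ_mem_convexHull hx
  obtain ⟨T, hT_card, htT⟩ := t.exists_card_le_subset_biUnion htK
  exact ⟨T, hT_card.trans ht_card, convexHull_mono htT hxt⟩

theorem convexHull_iUnion_eq_iUnion_card_eq [Fintype ι] {K : ι → Set E} {m : ℕ}
    (hm : finrank 𝕜 E + 1 ≤ m) (hmι : m ≤ Fintype.card ι) :
    convexHull 𝕜 (⋃ i, K i) = ⋃ S ∈ {S : Finset ι | #S = m}, convexHull 𝕜 (⋃ i ∈ S, K i) := by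
  refine Subset.antisymm (fun x hx => ?_)
    (iUnion₂_subset fun S _ => convexHull_mono (iUnion₂_subset_iUnion _ _))
  obtain ⟨T, hT_card, hxT⟩ := exists_finset_card_le_finrank_succ_mem_convexHull_iUnion hx
  obtain ⟨S, hTS, hS_card⟩ := exists_superset_card_eq (hT_card.trans hm) hmι
  exact mem_iUnion₂.2 ⟨S, hS_card, convexHull_mono (biUnion_subset_biUnion_left hTS) hxT⟩

end

theorem stmt_4_general {d n : ℕ} (hn : d + 1 ≤ n)
    (K : Fin n → Set (EuclideanSpace ℝ (Fin d))) :
    convexHull ℝ (⋃ i, K i) =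
      ⋃ S ∈ {S : Finset (Fin n) | S.card = d + 1}, convexHull ℝ (⋃ i ∈ S, K i) :=
  convexHull_iUnion_eq_iUnion_card_eq (by simp) (by simpa using hn)

theorem stmt_4 {d n : ℕ} (hn : d + 1 ≤ n)
    (K : Fin n → Set (EuclideanSpace ℝ (Fin d))) (hne : ∀ i, (K i).Nonempty) :
    convexHull ℝ (⋃ i, K i) =
      ⋃ S ∈ {S : Finset (Fin n) | S.card = d + 1}, convexHull ℝ (⋃ i ∈ S, K i) :=
  stmt_4_general hn K
end

section
/- Every finite set S of N points in ℝ^d admits a centerpoint: there exists p ∈ ℝ^d such that every closed halfspace containing p contains at least ⌈N/(d+1)⌉ points of S. -/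
/-!
Call `T ⊆ S` *large* if it misses fewer than `k` points of `S`. When `(d + 1)(k - 1) < |S|`,
any `d + 1` large sets share a point of `S` (union bound on their complements), so by Helly's
theorem the convex hulls of all large sets share a point `p`. A closed halfspace `l ≤ c` through
`p` then has at least `k` points of `S`: otherwise the points of `S` outside it form a large set
whose convex hull lies in `c < l` yet contains `p`. With `k = ⌈|S| / (d + 1)⌉` this is the
centerpoint theorem.
-/

open Set Finset Module

theorem Finset.exists_mem_forall_mem_of_sum_card_sdiff_lt {α : Type*} [DecidableEq α]
    {S : Finset α} {I : Finset (Finset α)} (h : ∑ T ∈ I, #(S \ T) < #S) :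
    ∃ x ∈ S, ∀ T ∈ I, x ∈ T := by
  obtain ⟨x, hxS, hx⟩ := exists_mem_notMem_of_card_lt_card (card_biUnion_le.trans_lt h)
  refine ⟨x, hxS, fun T hT => ?_⟩
  by_contra hxT
  exact hx (mem_biUnion.2 ⟨T, hT, mem_sdiff.2 ⟨hxS, hxT⟩⟩)

theorem Nat.mul_ceil_div_sub_one_lt (m : ℕ) {N : ℕ} (hN : 0 < N) :
    m * (⌈(N : ℝ) / m⌉₊ - 1) < N := by
  rcases m.eq_zero_or_pos with rfl | hm
  · simpa using hN
  have hk : 1 ≤ ⌈(N : ℝ) / m⌉₊ := Nat.one_le_iff_ne_zero.2 (by positivity)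
  have hceil := Nat.ceil_lt_add_one (by positivity : (0 : ℝ) ≤ N / m)
  have hreal : (m : ℝ) * (⌈(N : ℝ) / m⌉₊ - 1) < N := by
    rw [← lt_div_iff₀' (by positivity)]
    linarith
  rw [← Nat.cast_one, ← Nat.cast_sub hk] at hreal
  exact_mod_cast hreal

section Centerpoint

variable {𝕜 E : Type*} [Field 𝕜] [LinearOrder 𝕜] [IsStrictOrderedRing 𝕜]
  [AddCommGroup E] [Module 𝕜 E]

theorem exists_forall_mem_convexHull_of_card_sdiff_lt [FiniteDimensional 𝕜 E] [DecidableEq E]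
    (S : Finset E) {k : ℕ} (h : (finrank 𝕜 E + 1) * (k - 1) < #S) :
    ∃ p : E, ∀ T ⊆ S, #(S \ T) < k → p ∈ convexHull 𝕜 (T : Set E) := by
  have hinter : ∀ I ⊆ {T ∈ S.powerset | #(S \ T) < k}, #I ≤ finrank 𝕜 E + 1 →
      (⋂ T ∈ I, convexHull 𝕜 (T : Set E)).Nonempty := by
    intro I hI hIcard
    have hsum : ∑ T ∈ I, #(S \ T) < #S := calc
      ∑ T ∈ I, #(S \ T) ≤ ∑ _T ∈ I, (k - 1) :=
        sum_le_sum fun T hT => Nat.le_sub_one_of_lt (mem_filter.1 (hI hT)).2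
      _ = #I * (k - 1) := by rw [sum_const, smul_eq_mul]
      _ ≤ (finrank 𝕜 E + 1) * (k - 1) := Nat.mul_le_mul_right _ hIcard
      _ < #S := h
    obtain ⟨x, -, hx⟩ := exists_mem_forall_mem_of_sum_card_sdiff_lt hsum
    exact ⟨x, mem_iInter₂.2 fun T hT => subset_convexHull 𝕜 _ (hx T hT)⟩
  obtain ⟨p, hp⟩ := Convex.helly_theorem' (fun _ _ => convex_convexHull 𝕜 _) hinter
  exact ⟨p, fun T hTS hT => mem_iInter₂.1 hp T (by simpa [hTS] using hT)⟩

theorem le_card_filter_of_forall_mem_convexHull [DecidableEq E] {S : Finset E} {k : ℕ} {p : E}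
    (hp : ∀ T ⊆ S, #(S \ T) < k → p ∈ convexHull 𝕜 (T : Set E))
    (l : E →ₗ[𝕜] 𝕜) {c : 𝕜} (hc : l p ≤ c) :
    k ≤ #{x ∈ S | l x ≤ c} := by
  by_contra! hlt
  have hsdiff : S \ {x ∈ S | c < l x} = {x ∈ S | l x ≤ c} := by
    ext x; simp +contextual [not_lt]
  have hhull : convexHull 𝕜 ↑{x ∈ S | c < l x} ⊆ {x | c < l x} :=
    convexHull_min (fun x hx => (mem_filter.1 hx).2) (convex_halfSpace_gt l.isLinear c)
  exact hc.not_gt (hhull (hp _ (filter_subset _ _) (hsdiff ▸ hlt)))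

theorem exists_le_card_filter_le [FiniteDimensional 𝕜 E] (S : Finset E) {k : ℕ}
    (h : (finrank 𝕜 E + 1) * (k - 1) < #S) :
    ∃ p : E, ∀ (l : E →ₗ[𝕜] 𝕜) (c : 𝕜), l p ≤ c → k ≤ #{x ∈ S | l x ≤ c} := by
  classical
  obtain ⟨p, hp⟩ := exists_forall_mem_convexHull_of_card_sdiff_lt S h
  exact ⟨p, fun l c hc => le_card_filter_of_forall_mem_convexHull hp l hc⟩

end Centerpoint

theorem stmt_18 {d : ℕ} (S : Finset (EuclideanSpace ℝ (Fin d))) :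
    ∃ p : EuclideanSpace ℝ (Fin d),
      ∀ l : EuclideanSpace ℝ (Fin d) →L[ℝ] ℝ, l ≠ 0 → ∀ c : ℝ, l p ≤ c →
        ((⌈(S.card : ℝ) / (d + 1)⌉ : ℤ) : ℝ) ≤
          ({x ∈ (S : Set (EuclideanSpace ℝ (Fin d))) | l x ≤ c}).ncard := by
  rcases S.eq_empty_or_nonempty with rfl | hS
  · exact ⟨0, fun _ _ _ _ => by simp⟩
  have hdepth := Nat.mul_ceil_div_sub_one_lt (d + 1) hS.card_pos
  push_cast at hdepth
  obtain ⟨p, hp⟩ := exists_le_card_filter_le (𝕜 := ℝ) S (by rwa [finrank_euclideanSpace_fin])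
  refine ⟨p, fun l _ c hc => ?_⟩
  have hcard : {x ∈ (S : Set _) | l x ≤ c}.ncard = #{x ∈ S | l x ≤ c} := by
    rw [← ncard_coe_finset, coe_filter]; rfl
  rw [← natCast_ceil_eq_intCast_ceil (by positivity), hcard]
  exact_mod_cast hp l.toLinearMap c hc
end
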